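/- Let d ≥ 1 and let S be a nonempty finite set of permutations of Fin d, with characteristic polynomial f_S. Then the iterates f_S^{∘n}(1) converge to 0 as n → ∞ if and only if both of the following hold: (i) ∑_{σ ∈ S} (number of fixed points of σ) ≤ #S, and (ii) it is not the case that every element of S has exactly one fixed point. -/

import Mathlib

open Finset Filter

/-- The number of fixed points of a permutation of `Fin d`. -/
def numFix {d : ℕ} (σ : Equiv.Perm (Fin d)) : ℕ :=
  (Finset.univ.filter fun i => σ i = i).card

/-- `D S k` is the number of permutations in `S` having exactly `k` fixed points. -/
def D {d : ℕ} (S : Finset (Equiv.Perm (Fin d))) (k : ℕ) : ℕ :=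
  (S.filter fun σ => numFix σ = k).card

/-- The characteristic polynomial of a finite set of permutations of `Fin d`:
`f_S(x) = ∑_{k=1}^{d} (D_S(k)/#S)·(1 − (1 − x)^k)`. -/
noncomputable def fS {d : ℕ} (S : Finset (Equiv.Perm (Fin d))) (x : ℝ) : ℝ :=
  ∑ k ∈ Finset.Icc 1 d, ((D S k : ℝ) / (S.card : ℝ)) * (1 - (1 - x) ^ k)

/-!
Averaging over `S` gives `f_S(x) = (∑_{σ ∈ S} (1 - (1 - x) ^ #Fix(σ))) / #S`, a monotone self-map
of `[0, 1]` fixing `0` whose derivative at `0` is the mean number of fixed points. Bernoulli's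
inequality `1 - (1 - x) ^ k ≤ k x`, strict for `k ≥ 2` and `0 < x ≤ 1`, shows that under (i) and
(ii) `f_S(x) < x` on `(0, 1]`, so the decreasing orbit of `1` converges to a fixed point, which
must be `0`. Conversely, if the mean exceeds `1` then `ε < f_S(ε)` for some small `ε > 0` and the
orbit of `1` stays in the invariant interval `[ε, 1]`; if every `σ` has exactly one fixed point,
`f_S` is the identity.
-/

open Set Topology

section Iteration

variable {f : ℝ → ℝ} {a b : ℝ}

theorem tendsto_iterate_of_forall_lt_self (hf : Continuous f) (hmaps : MapsTo f (Icc a b) (Icc a b))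
    (ha : f a = a) (hlt : ∀ x ∈ Ioc a b, f x < x) {x : ℝ} (hx : x ∈ Icc a b) :
    Tendsto (fun n => f^[n] x) atTop (𝓝 a) := by
  have hmem (n : ℕ) : f^[n] x ∈ Icc a b := hmaps.iterate n hx
  have hle : ∀ y ∈ Icc a b, f y ≤ y := fun y hy =>
    hy.1.eq_or_lt.elim (fun h => h ▸ ha.le) fun h => (hlt y ⟨h, hy.2⟩).le
  have hanti : Antitone fun n => f^[n] x := antitone_nat_of_succ_le fun n => by
    rw [Function.iterate_succ_apply']
    exact hle _ (hmem n)
  have hconv := tendsto_atTop_ciInf hanti ⟨a, by rintro _ ⟨n, rfl⟩; exact (hmem n).1⟩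
  set L := ⨅ n, f^[n] x
  have hL : L ∈ Icc a b := isClosed_Icc.mem_of_tendsto hconv (Eventually.of_forall hmem)
  have hfix : f L = L := isFixedPt_of_tendsto_iterate hconv hf.continuousAt
  obtain hLa | hLa := hL.1.eq_or_lt
  · rwa [← hLa] at hconv
  · exact absurd hfix (hlt L ⟨hLa, hL.2⟩).ne

theorem HasDerivAt.eventually_lt_of_one_lt {f' : ℝ} (hf : HasDerivAt f f' a) (ha : f a = a)
    (hf' : 1 < f') : ∀ᶠ x in 𝓝[>] a, x < f x := by
  have hslope := (hasDerivAt_iff_tendsto_slope.1 hf).mono_left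
    (nhdsWithin_mono a fun x (hx : a < x) => hx.ne')
  filter_upwards [hslope.eventually (eventually_gt_nhds hf'), self_mem_nhdsWithin]
    with x hx (hax : a < x)
  rw [slope_def_field, ha, one_lt_div (sub_pos.2 hax)] at hx
  linarith

end Iteration

lemma one_sub_one_sub_pow_le (k : ℕ) {x : ℝ} (hx : x ≤ 2) : 1 - (1 - x) ^ k ≤ k * x := by
  have h := one_add_mul_le_pow (a := -x) (by linarith) k
  rw [← sub_eq_add_neg, mul_neg, ← sub_eq_add_neg] at h
  linarith

lemma one_sub_one_sub_pow_lt {k : ℕ} (hk : 2 ≤ k) {x : ℝ} (hx0 : x ≠ 0) (hx1 : x ≤ 1) :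
    1 - (1 - x) ^ k < k * x := by
  have h := one_add_mul_self_lt_rpow_one_add (s := -x) (by linarith) (neg_ne_zero.2 hx0)
    (p := k) (by exact_mod_cast hk)
  rw [Real.rpow_natCast, ← sub_eq_add_neg, mul_neg, ← sub_eq_add_neg] at h
  linarith

section CharacteristicPolynomial

variable {d : ℕ} (S : Finset (Equiv.Perm (Fin d)))

lemma numFix_le (σ : Equiv.Perm (Fin d)) : numFix σ ≤ d :=
  (card_filter_le _ _).trans_eq (card_fin d)

lemma sum_Icc_D_mul {φ : ℕ → ℝ} (hφ : φ 0 = 0) :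
    ∑ k ∈ Icc 1 d, (D S k : ℝ) * φ k = ∑ σ ∈ S, φ (numFix σ) := by
  calc ∑ k ∈ Icc 1 d, (D S k : ℝ) * φ k = ∑ k ∈ Icc 0 d, (D S k : ℝ) * φ k := by
        refine sum_subset (Icc_subset_Icc_left zero_le_one) fun k hk hk' => ?_
        obtain rfl : k = 0 := by simp_all
        simp [hφ]
    _ = ∑ k ∈ Icc 0 d, ∑ σ ∈ S with numFix σ = k, φ k := by
        simp only [sum_const, nsmul_eq_mul, D]
    _ = ∑ σ ∈ S, φ (numFix σ) :=
        sum_fiberwise_of_maps_to' (fun σ _ => mem_Icc.2 ⟨Nat.zero_le _, numFix_le σ⟩) φ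

lemma fS_eq_sum_div_card (x : ℝ) :
    fS S x = (∑ σ ∈ S, (1 - (1 - x) ^ numFix σ)) / #S := by
  rw [← sum_Icc_D_mul S (φ := fun k => 1 - (1 - x) ^ k) (by simp), fS, sum_div]
  exact sum_congr rfl fun k _ => div_mul_eq_mul_div _ _ _

lemma fS_zero : fS S 0 = 0 := by
  simp [fS_eq_sum_div_card]

lemma fS_eq_self_of_forall_numFix_eq_one (hS : S.Nonempty) (hone : ∀ σ ∈ S, numFix σ = 1)
    (x : ℝ) : fS S x = x := by
  rw [fS_eq_sum_div_card, sum_congr rfl fun σ hσ => by rw [hone σ hσ, pow_one, sub_sub_cancel],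
    sum_const, nsmul_eq_mul, mul_div_cancel_left₀ _ (Nat.cast_ne_zero.2 hS.card_ne_zero)]

lemma continuous_fS : Continuous (fS S) := by
  unfold fS
  fun_prop

lemma hasDerivAt_fS_zero : HasDerivAt (fS S) ((∑ σ ∈ S, numFix σ : ℝ) / #S) 0 := by
  rw [show fS S = _ from funext (fS_eq_sum_div_card S)]
  refine HasDerivAt.div_const (HasDerivAt.fun_sum fun σ _ => ?_) _
  simpa using ((hasDerivAt_id (0 : ℝ)).const_sub 1 |>.fun_pow (numFix σ)).const_sub 1

lemma monotoneOn_fS : MonotoneOn (fS S) (Iic 1) := fun x hx y hy hxy => by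
  simp only [fS_eq_sum_div_card]
  gcongr with σ
  exact sub_nonneg.2 hy

lemma fS_le_one {x : ℝ} (hx : x ≤ 1) : fS S x ≤ 1 := by
  rw [fS_eq_sum_div_card]
  refine div_le_one_of_le₀ ?_ (Nat.cast_nonneg _)
  calc ∑ σ ∈ S, (1 - (1 - x) ^ numFix σ) ≤ ∑ _σ ∈ S, (1 : ℝ) :=
        sum_le_sum fun σ _ => sub_le_self 1 (pow_nonneg (sub_nonneg.2 hx) _)
    _ = #S := by simp

lemma mapsTo_fS_Icc {a : ℝ} (ha : a ≤ fS S a) : MapsTo (fS S) (Icc a 1) (Icc a 1) :=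
  fun _ hx => ⟨ha.trans (monotoneOn_fS S (hx.1.trans hx.2) hx.2 hx.1), fS_le_one S hx.2⟩

lemma fS_lt_self (hsum : ∑ σ ∈ S, numFix σ ≤ #S) (hone : ¬ ∀ σ ∈ S, numFix σ = 1) {x : ℝ}
    (hx0 : 0 < x) (hx1 : x ≤ 1) : fS S x < x := by
  obtain ⟨τ, hτ, hτ1⟩ : ∃ τ ∈ S, numFix τ ≠ 1 := by simpa using hone
  have hbern (σ : Equiv.Perm (Fin d)) (_ : σ ∈ S) : 1 - (1 - x) ^ numFix σ ≤ numFix σ * x :=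
    one_sub_one_sub_pow_le _ (by linarith)
  have hlin : ∑ σ ∈ S, (numFix σ : ℝ) * x = (∑ σ ∈ S, numFix σ : ℕ) * x := by
    push_cast
    exact (sum_mul ..).symm
  rw [fS_eq_sum_div_card, div_lt_iff₀ (by exact_mod_cast card_pos.2 ⟨τ, hτ⟩), mul_comm]
  by_cases hbig : ∃ σ ∈ S, 2 ≤ numFix σ
  · obtain ⟨σ, hσ, h2⟩ := hbig
    calc ∑ σ ∈ S, (1 - (1 - x) ^ numFix σ) < ∑ σ ∈ S, (numFix σ : ℝ) * x :=
          sum_lt_sum hbern ⟨σ, hσ, one_sub_one_sub_pow_lt h2 hx0.ne' hx1⟩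
      _ = (∑ σ ∈ S, numFix σ : ℕ) * x := hlin
      _ ≤ #S * x := by gcongr
  · push Not at hbig
    have hlt : ∑ σ ∈ S, numFix σ < #S := by
      calc ∑ σ ∈ S, numFix σ < ∑ _σ ∈ S, 1 :=
            sum_lt_sum (fun σ hσ => by linarith [hbig σ hσ]) ⟨τ, hτ, by have := hbig τ hτ; omega⟩
        _ = #S := by simp
    calc ∑ σ ∈ S, (1 - (1 - x) ^ numFix σ) ≤ ∑ σ ∈ S, (numFix σ : ℝ) * x := sum_le_sum hbern
      _ = (∑ σ ∈ S, numFix σ : ℕ) * x := hlin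
      _ < #S * x := by gcongr

end CharacteristicPolynomial

theorem stmt8_general (d : ℕ) (S : Finset (Equiv.Perm (Fin d))) (hS : S.Nonempty) :
    Tendsto (fun n => (fS S)^[n] 1) atTop (nhds 0) ↔
      ((∑ σ ∈ S, numFix σ) ≤ S.card ∧ ¬ ∀ σ ∈ S, numFix σ = 1) := by
  refine ⟨fun htend => ⟨?_, fun hone => ?_⟩, fun ⟨hsum, hone⟩ => ?_⟩
  · by_contra! hgt
    have hderiv : 1 < (∑ σ ∈ S, numFix σ : ℝ) / #S := by
      rw [one_lt_div (by exact_mod_cast hS.card_pos)]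
      exact_mod_cast hgt
    obtain ⟨ε, hε, hεpos, hε1⟩ := (((hasDerivAt_fS_zero S).eventually_lt_of_one_lt (fS_zero S)
      hderiv).and (Ioc_mem_nhdsGT one_pos)).exists
    have hbound (n : ℕ) : ε ≤ (fS S)^[n] 1 :=
      ((mapsTo_fS_Icc S hε.le).iterate n ⟨hε1, le_rfl⟩).1
    exact hεpos.not_ge (ge_of_tendsto' htend hbound)
  · have hid : fS S = id := funext (fS_eq_self_of_forall_numFix_eq_one S hS hone)
    simp [hid] at htend
  · exact tendsto_iterate_of_forall_lt_self (continuous_fS S) (mapsTo_fS_Icc S (fS_zero S).ge)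
      (fS_zero S) (fun _ hx => fS_lt_self S hsum hone hx.1 hx.2) ⟨zero_le_one, le_rfl⟩

theorem stmt8 (d : ℕ) (hd : 1 ≤ d) (S : Finset (Equiv.Perm (Fin d))) (hS : S.Nonempty) :
    Tendsto (fun n => (fS S)^[n] 1) atTop (nhds 0) ↔
      ((∑ σ ∈ S, numFix σ) ≤ S.card ∧ ¬ ∀ σ ∈ S, numFix σ = 1) :=
  stmt8_general d S hS
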